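/- Let k ≥ 6 be even, h ≥ 3 real, and n ≥ 2 an integer not divisible by p^{k/2−1} for any prime p ≤ h. Then d(n; k/2, k/2−1) ≤ exp(log 2·(log n/((k/2−1)·log h) + log n/((k/2)·log h))), where d(n; i, j) counts triples (a,b,c) with n = a·b^i·c^j. -/

import Mathlib

/-!
A triple `(a, b, c)` with `n = a b^i c^j` is determined by `(b, c)`, where `b^i ∣ n` and
`c^j ∣ n`. The positive `b` with `b^t ∣ n` are exactly the divisors of
`m = ∏ p ^ ⌊v_p(n) / t⌋`, so there are at most `2^Ω(m)` of them. Every prime factor `p` of `m`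
satisfies `p^t ∣ n`, hence `p > h` by hypothesis, and so `h^(t Ω(m)) ≤ m^t ≤ n`.
-/

open Finset ArithmeticFunction
open scoped ArithmeticFunction.Omega

namespace Nat

noncomputable def rootPart (t n : ℕ) : ℕ :=
  (n.factorization.mapRange (· / t) (Nat.zero_div t)).prod (· ^ ·)

lemma factorization_rootPart (t n : ℕ) :
    (rootPart t n).factorization = n.factorization.mapRange (· / t) (Nat.zero_div t) :=
  prod_pow_factorization_eq_self fun _ hp =>
    prime_of_mem_primeFactors (Finsupp.support_mapRange hp)

lemma rootPart_ne_zero (t n : ℕ) : rootPart t n ≠ 0 :=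
  Finsupp.prod_ne_zero_iff.mpr fun _ hp =>
    pow_ne_zero _ (prime_of_mem_primeFactors (Finsupp.support_mapRange hp)).ne_zero

lemma pow_dvd_iff_dvd_rootPart {t n b : ℕ} (hn : n ≠ 0) (ht : 0 < t) :
    b ^ t ∣ n ↔ b ∣ rootPart t n := by
  rcases eq_or_ne b 0 with rfl | hb
  · simp [zero_pow ht.ne', hn, rootPart_ne_zero]
  rw [← factorization_le_iff_dvd (pow_ne_zero t hb) hn,
    ← factorization_le_iff_dvd hb (rootPart_ne_zero t n), factorization_pow,
    factorization_rootPart, Finsupp.le_def, Finsupp.le_def]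
  simp [Nat.le_div_iff_mul_le ht, mul_comm]

lemma card_divisors_le_two_pow_cardFactors (m : ℕ) : #m.divisors ≤ 2 ^ Ω m := by
  rcases eq_or_ne m 0 with rfl | hm
  · simp
  rw [card_divisors hm, cardFactors_eq_sum_factorization, Finsupp.sum, support_factorization,
    ← prod_pow_eq_pow_sum]
  exact prod_le_prod' fun _ _ => Nat.lt_two_pow_self

lemma pow_cardFactors_le {m : ℕ} {x : ℝ} (hm : m ≠ 0) (hx : 0 ≤ x)
    (hp : ∀ p ∈ m.primeFactors, x ≤ p) : x ^ Ω m ≤ m := by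
  conv_rhs => rw [← prod_factorization_pow_eq_self hm]
  rw [cardFactors_eq_sum_factorization, Finsupp.sum, Finsupp.prod, support_factorization,
    ← prod_pow_eq_pow_sum]
  push_cast
  exact prod_le_prod (fun _ _ => by positivity) fun p hp' => pow_le_pow_left₀ hx (hp p hp') _

lemma pos_pow_dvd_iff_mem_divisors_rootPart {t n b : ℕ} (hn : n ≠ 0) (ht : 0 < t) :
    0 < b ∧ b ^ t ∣ n ↔ b ∈ (rootPart t n).divisors := by
  rw [mem_divisors, pow_dvd_iff_dvd_rootPart hn ht]
  exact ⟨fun h => ⟨h.2, rootPart_ne_zero t n⟩,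
    fun h => ⟨pos_of_dvd_of_pos h.1 (pos_of_ne_zero h.2), h.1⟩⟩

lemma finite_pos_pow_dvd {t n : ℕ} (hn : n ≠ 0) (ht : 0 < t) :
    Finite {b : ℕ // 0 < b ∧ b ^ t ∣ n} :=
  .of_equiv _ <| Equiv.subtypeEquivRight fun _ =>
    (pos_pow_dvd_iff_mem_divisors_rootPart hn ht).symm

lemma card_pos_pow_dvd {t n : ℕ} (hn : n ≠ 0) (ht : 0 < t) :
    Nat.card {b : ℕ // 0 < b ∧ b ^ t ∣ n} = #(rootPart t n).divisors := by
  rw [Nat.card_congr <| Equiv.subtypeEquivRight fun _ =>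
      pos_pow_dvd_iff_mem_divisors_rootPart hn ht,
    Nat.card_eq_fintype_card, Fintype.card_coe]

lemma card_pos_pow_dvd_le_exp {t n : ℕ} {x : ℝ} (hn : n ≠ 0) (ht : 0 < t) (hx : 1 < x)
    (hlarge : ∀ p : ℕ, p.Prime → p ^ t ∣ n → x ≤ p) :
    (Nat.card {b : ℕ // 0 < b ∧ b ^ t ∣ n} : ℝ) ≤
      Real.exp (Real.log 2 * (Real.log n / (t * Real.log x))) := by
  set m := rootPart t n
  have hm : m ≠ 0 := rootPart_ne_zero t n
  have hmt : m ^ t ∣ n := (pow_dvd_iff_dvd_rootPart hn ht).mpr dvd_rfl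
  have hxm : x ^ Ω m ≤ m := pow_cardFactors_le hm (by linarith) fun p hp =>
    hlarge p (prime_of_mem_primeFactors hp)
      ((pow_dvd_pow_of_dvd (dvd_of_mem_primeFactors hp) t).trans hmt)
  have hxn : x ^ (Ω m * t) ≤ n := calc
    x ^ (Ω m * t) = (x ^ Ω m) ^ t := pow_mul _ _ _
    _ ≤ (m : ℝ) ^ t := by gcongr
    _ ≤ n := by exact_mod_cast le_of_dvd (pos_of_ne_zero hn) hmt
  have hΩ : Ω m * (t * Real.log x) ≤ Real.log n := by
    have := Real.log_le_log (by positivity) hxn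
    rwa [Real.log_pow, cast_mul, mul_assoc] at this
  calc (Nat.card {b : ℕ // 0 < b ∧ b ^ t ∣ n} : ℝ)
      ≤ (2 : ℝ) ^ (Ω m : ℝ) := by
        rw [card_pos_pow_dvd hn ht, Real.rpow_natCast]
        exact_mod_cast card_divisors_le_two_pow_cardFactors m
    _ = Real.exp (Real.log 2 * Ω m) := Real.rpow_def_of_pos two_pos _
    _ ≤ Real.exp (Real.log 2 * (Real.log n / (t * Real.log x))) := by
        gcongr
        rwa [le_div_iff₀ (by have := Real.log_pos hx; positivity)]

lemma card_triples_le_mul {i j n : ℕ} (hn : n ≠ 0) (hi : 0 < i) (hj : 0 < j) :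
    Nat.card {t : ℕ × ℕ × ℕ //
        0 < t.1 ∧ 0 < t.2.1 ∧ 0 < t.2.2 ∧ n = t.1 * t.2.1 ^ i * t.2.2 ^ j} ≤
      Nat.card {b : ℕ // 0 < b ∧ b ^ i ∣ n} * Nat.card {c : ℕ // 0 < c ∧ c ^ j ∣ n} := by
  have := finite_pos_pow_dvd hn hi
  have := finite_pos_pow_dvd hn hj
  rw [← Nat.card_prod]
  refine Nat.card_le_card_of_injective
    (fun ⟨(a, b, c), _, hb, hc, h⟩ => (⟨b, hb, a * c ^ j, h.trans (by ring)⟩,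
      ⟨c, hc, a * b ^ i, h.trans (by ring)⟩)) ?_
  rintro ⟨⟨a, b, c⟩, _, hb, hc, h⟩ ⟨⟨a', b', c'⟩, _, _, _, h'⟩ hbc
  simp only [Prod.mk.injEq, Subtype.mk.injEq] at hbc
  obtain ⟨rfl, rfl⟩ := hbc
  have : a = a' := Nat.eq_of_mul_eq_mul_right (by positivity : 0 < b ^ i * c ^ j)
    (by rw [← mul_assoc, ← mul_assoc, ← h, ← h'])
  subst this
  rfl

end Nat

theorem factor_count_bound (k n : ℕ) (h : ℝ) (hk : 6 ≤ k) (hke : Even k)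
    (hh : 3 ≤ h) (hn : 2 ≤ n)
    (hfree : ∀ p : ℕ, p.Prime → (p : ℝ) ≤ h → ¬ p ^ (k / 2 - 1) ∣ n) :
    ((Nat.card {t : ℕ × ℕ × ℕ //
        0 < t.1 ∧ 0 < t.2.1 ∧ 0 < t.2.2 ∧
        n = t.1 * t.2.1 ^ (k / 2) * t.2.2 ^ (k / 2 - 1)} : ℕ) : ℝ) ≤
      Real.exp (Real.log 2 *
        (Real.log n / (((k : ℝ) / 2 - 1) * Real.log h) +
          Real.log n / (((k : ℝ) / 2) * Real.log h))) := by
  obtain ⟨m, rfl⟩ := hke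
  have hm : (m + m) / 2 = m := by omega
  have hn0 : n ≠ 0 := by omega
  have hh1 : 1 < h := by linarith
  rw [hm] at hfree ⊢
  have hlarge : ∀ p : ℕ, p.Prime → p ^ (m - 1) ∣ n → h ≤ p := fun p hp hdvd =>
    (not_le.mp fun hle => hfree p hp hle hdvd).le
  have hb := Nat.card_pos_pow_dvd_le_exp hn0 (by omega) hh1 fun p hp hdvd =>
    hlarge p hp ((pow_dvd_pow p (m.sub_le 1)).trans hdvd)
  have hc := Nat.card_pos_pow_dvd_le_exp hn0 (by omega) hh1 hlarge
  calc _ ≤ ((Nat.card {b : ℕ // 0 < b ∧ b ^ m ∣ n} : ℕ) : ℝ) *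
        (Nat.card {c : ℕ // 0 < c ∧ c ^ (m - 1) ∣ n} : ℕ) := by
        exact_mod_cast Nat.card_triples_le_mul hn0 (by omega) (by omega)
    _ ≤ _ := mul_le_mul hb hc (by positivity) (by positivity)
    _ = _ := by
        rw [← Real.exp_add, Nat.cast_sub (by omega : 1 ≤ m)]
        push_cast
        ring_nf
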